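/- Effect of Copy on the contexts of the fresh copy: if a is an edge of !-tensor G with ectx_G(a) = [E_1,...,E_n] and nctx_G(a) = [N_1,...,N_m], and Copy is applied at box E_i (in the edge context), then ectx_{Copy_{E_i}(G)}(fr(a)) = [fr(E_1),...,fr(E_i),E_{i+1},...,E_n]; if instead Copy is applied at box N_i (in the node context), then ectx of fr(a) is [fr(E_1),...,fr(E_n)] and nctx is [fr(N_1),...,fr(N_i),N_{i+1},...,N_m]. -/

import Mathlib

/-!
Copy at a box `A` of the context of `a` changes nothing outside `A`, and at `A` it adds the
renamed copy `[fr(G)]_{fr(A)}`, the only place where `fr(a)` occurs; there its contexts are the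
`fr`-images of those of `a` inside `A`. Hence every box of the context up to and including `A` is
renamed and the boxes outside `A` are kept, provided `A` occurs exactly once in the contexts of
`a`. C1 keeps `A` out of the other context. The node context has no repetitions by F2; the edge
context is a chain of immediately nested boxes (C2), and by F2 a box is strictly larger than the
boxes nested in it, so this chain has no repetitions either.
-/

namespace Bang

/-- Edgeterms: ε, directed edges â (out) and ǎ (inn), clockwise `[e⟩_A` and
anticlockwise `⟨e]_A` !-box edge groups, and concatenation. -/
inductive EdgeTerm (E B : Type) : Type
  | eps : EdgeTerm E B
  | out (a : E) : EdgeTerm E B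
  | inn (a : E) : EdgeTerm E B
  | cw (e : EdgeTerm E B) (A : B) : EdgeTerm E B
  | acw (e : EdgeTerm E B) (A : B) : EdgeTerm E B
  | cat (e f : EdgeTerm E B) : EdgeTerm E B

variable {E B S : Type}

/-- The smallest congruence on edgeterms generated by the unit laws for ε,
associativity of concatenation, and `[ε⟩_A ≡ ε ≡ ⟨ε]_A`. -/
inductive ETEquiv : EdgeTerm E B → EdgeTerm E B → Prop
  | refl (e) : ETEquiv e e
  | symm {e f} : ETEquiv e f → ETEquiv f e
  | trans {e f g} : ETEquiv e f → ETEquiv f g → ETEquiv e g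
  | catCongr {e e' f f'} : ETEquiv e e' → ETEquiv f f' → ETEquiv (.cat e f) (.cat e' f')
  | cwCongr (A) {e f} : ETEquiv e f → ETEquiv (.cw e A) (.cw f A)
  | acwCongr (A) {e f} : ETEquiv e f → ETEquiv (.acw e A) (.acw f A)
  | epsCat (e) : ETEquiv (.cat .eps e) e
  | catEps (e) : ETEquiv (.cat e .eps) e
  | assoc (e f g) : ETEquiv (.cat (.cat e f) g) (.cat e (.cat f g))
  | cwEps (A) : ETEquiv (.cw .eps A) .eps
  | acwEps (A) : ETEquiv (.acw .eps A) .eps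

/-- !-pretensor expressions: the trivial tensor 1, identity tensors `1_{â b̌}`,
atomic tensors `φ_e`, !-box wrapping `[G]_A` and products `G H`. -/
inductive Pretensor (E B S : Type) : Type
  | triv : Pretensor E B S
  | idt (a b : E) : Pretensor E B S
  | atom (φ : S) (e : EdgeTerm E B) : Pretensor E B S
  | box (G : Pretensor E B S) (A : B) : Pretensor E B S
  | prod (G H : Pretensor E B S) : Pretensor E B S

/-- Edge names occurring in an edgeterm. -/
def EdgeTerm.edgeSet : EdgeTerm E B → Set E
  | .eps => ∅
  | .out a => {a}
  | .inn a => {a}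
  | .cw e _ => e.edgeSet
  | .acw e _ => e.edgeSet
  | .cat e f => e.edgeSet ∪ f.edgeSet

/-- !-box names occurring in an edgeterm. -/
def EdgeTerm.boxSet : EdgeTerm E B → Set B
  | .eps => ∅
  | .out _ => ∅
  | .inn _ => ∅
  | .cw e A => e.boxSet ∪ {A}
  | .acw e A => e.boxSet ∪ {A}
  | .cat e f => e.boxSet ∪ f.boxSet

/-- Edges(G): edge names occurring in a !-pretensor expression. -/
def Pretensor.edgeSet : Pretensor E B S → Set E
  | .triv => ∅
  | .idt a b => {a, b}
  | .atom _ e => e.edgeSet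
  | .box G _ => G.edgeSet
  | .prod G H => G.edgeSet ∪ H.edgeSet

/-- Boxes(G): !-box names occurring in a !-pretensor expression. -/
def Pretensor.boxSet : Pretensor E B S → Set B
  | .triv => ∅
  | .idt _ _ => ∅
  | .atom _ e => e.boxSet
  | .box G A => G.boxSet ∪ {A}
  | .prod G H => G.boxSet ∪ H.boxSet

/-- Renaming of edge- and !-box names in an edgeterm. -/
def EdgeTerm.rename (fe : E → E) (fb : B → B) : EdgeTerm E B → EdgeTerm E B
  | .eps => .eps
  | .out a => .out (fe a)
  | .inn a => .inn (fe a)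
  | .cw e A => .cw (e.rename fe fb) (fb A)
  | .acw e A => .acw (e.rename fe fb) (fb A)
  | .cat e f => .cat (e.rename fe fb) (f.rename fe fb)

/-- Renaming of edge- and !-box names in a !-pretensor expression. -/
def Pretensor.rename (fe : E → E) (fb : B → B) : Pretensor E B S → Pretensor E B S
  | .triv => .triv
  | .idt a b => .idt (fe a) (fe b)
  | .atom φ e => .atom φ (e.rename fe fb)
  | .box G A => .box (G.rename fe fb) (fb A)
  | .prod G H => .prod (G.rename fe fb) (H.rename fe fb)

/-- A freshness function for `G`: a pair of bijections on edge names and on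
!-box names whose images of Edges(G), Boxes(G) are disjoint from those sets. -/
def IsFresh (fe : E → E) (fb : B → B) (G : Pretensor E B S) : Prop :=
  Function.Bijective fe ∧ Function.Bijective fb ∧
    G.edgeSet ∩ (fe '' G.edgeSet) = ∅ ∧ G.boxSet ∩ (fb '' G.boxSet) = ∅

section Ops

variable [DecidableEq E] [DecidableEq B]

/-- Occurrence of a directed edge (name, isOutput) in an edgeterm. -/
def EdgeTerm.occ : EdgeTerm E B → E × Bool → Bool
  | .eps, _ => false
  | .out a, d => decide (d = (a, true))
  | .inn a, d => decide (d = (a, false))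
  | .cw e _, d => e.occ d
  | .acw e _, d => e.occ d
  | .cat e f, d => e.occ d || f.occ d

/-- The edge context of a directed edge within an edgeterm (inside-out). -/
def EdgeTerm.ectx : EdgeTerm E B → E × Bool → List B
  | .eps, _ => []
  | .out _, _ => []
  | .inn _, _ => []
  | .cw e A, d => if e.occ d then e.ectx d ++ [A] else []
  | .acw e A, d => if e.occ d then e.ectx d ++ [A] else []
  | .cat e f, d => if e.occ d then e.ectx d else f.ectx d

/-- Occurrence of a directed edge in a !-pretensor expression. -/
def Pretensor.occ : Pretensor E B S → E × Bool → Bool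
  | .triv, _ => false
  | .idt a b, d => decide (d = (a, true)) || decide (d = (b, false))
  | .atom _ e, d => e.occ d
  | .box G _, d => G.occ d
  | .prod G H, d => G.occ d || H.occ d

/-- ectx_G(a): the !-boxes containing `a` that occur as part of its edgeterm. -/
def Pretensor.ectx : Pretensor E B S → E × Bool → List B
  | .triv, _ => []
  | .idt _ _, _ => []
  | .atom _ e, d => e.ectx d
  | .box G _, d => G.ectx d
  | .prod G H, d => if G.occ d then G.ectx d else H.ectx d

/-- nctx_G(a): the remaining !-boxes enclosing the node carrying `a` (inside-out). -/
def Pretensor.nctx : Pretensor E B S → E × Bool → List B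
  | .triv, _ => []
  | .idt _ _, _ => []
  | .atom _ _, _ => []
  | .box G A, d => if G.occ d then G.nctx d ++ [A] else []
  | .prod G H, d => if G.occ d then G.nctx d else H.nctx d

/-- ctx_G(a) = ectx_G(a).nctx_G(a). -/
def Pretensor.ctx (G : Pretensor E B S) (d : E × Bool) : List B := G.ectx d ++ G.nctx d

/-- Number of occurrences of a directed edge in an edgeterm. -/
def EdgeTerm.countD : EdgeTerm E B → E × Bool → Nat
  | .eps, _ => 0
  | .out a, d => if d = (a, true) then 1 else 0
  | .inn a, d => if d = (a, false) then 1 else 0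
  | .cw e _, d => e.countD d
  | .acw e _, d => e.countD d
  | .cat e f, d => e.countD d + f.countD d

/-- Number of occurrences of a directed edge in a !-pretensor expression. -/
def Pretensor.countD : Pretensor E B S → E × Bool → Nat
  | .triv, _ => 0
  | .idt a b, d => (if d = (a, true) then 1 else 0) + (if d = (b, false) then 1 else 0)
  | .atom _ e, d => e.countD d
  | .box G _, d => G.countD d
  | .prod G H, d => G.countD d + H.countD d

/-- Number of !-box wrappings `[...]_A` with the given name. -/
def Pretensor.countBox : Pretensor E B S → B → Nat
  | .triv, _ => 0
  | .idt _ _, _ => 0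
  | .atom _ _, _ => 0
  | .box G A, C => (if A = C then 1 else 0) + G.countBox C
  | .prod G H, C => G.countBox C + H.countBox C

/-- The !-boxes of a !-pretensor expression that are not nested inside any other box. -/
def Pretensor.topBoxes : Pretensor E B S → Set B
  | .box _ A => {A}
  | .prod G H => G.topBoxes ∪ H.topBoxes
  | _ => ∅

/-- The immediate nesting relation: `G.prec A C` means the !-box `A` is nested
directly inside the !-box `C` in `G` (no boxes between). -/
def Pretensor.prec : Pretensor E B S → B → B → Prop
  | .box H C, A, C' => (C' = C ∧ A ∈ H.topBoxes) ∨ H.prec A C'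
  | .prod G H, A, C' => G.prec A C' ∨ H.prec A C'
  | _, _, _ => False

/-- Well-formedness of a !-pretensor expression: the freshness conditions F1, F2
and the context conditions C1, C2, C3.  A !-tensor expression is a well-formed
!-pretensor expression. -/
def Pretensor.WF (G : Pretensor E B S) : Prop :=
  -- F1: each directed edge occurs at most once
  (∀ d : E × Bool, G.countD d ≤ 1) ∧
  -- F2: each !-box wrapping occurs at most once per name
  (∀ A : B, G.countBox A ≤ 1) ∧
  -- C1: edge context and node context are disjoint
  (∀ d : E × Bool, G.occ d = true → ∀ A ∈ G.ectx d, A ∉ G.nctx d) ∧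
  -- C2: edge contexts consist of boxes of G, consecutively nested
  (∀ d : E × Bool, G.occ d = true →
    (∀ A ∈ G.ectx d, 1 ≤ G.countBox A) ∧ (G.ectx d).Chain' G.prec) ∧
  -- C3: bound pairs have compatible contexts
  (∀ a : E, G.occ (a, true) = true → G.occ (a, false) = true →
    ∃ es bs : List B,
      es ++ G.nctx (a, false) = G.ectx (a, true) ++ bs ∧
      es ++ G.nctx (a, true) = G.ectx (a, false) ++ bs)

/-- Kill_A on edgeterms. -/
def EdgeTerm.kill (A : B) : EdgeTerm E B → EdgeTerm E B
  | .cw e C => if C = A then .eps else .cw (e.kill A) C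
  | .acw e C => if C = A then .eps else .acw (e.kill A) C
  | .cat e f => .cat (e.kill A) (f.kill A)
  | e => e

/-- Kill_A on !-pretensor expressions: deletes the box `A` and its contents. -/
def Pretensor.kill (A : B) : Pretensor E B S → Pretensor E B S
  | .box G C => if C = A then .triv else .box (G.kill A) C
  | .atom φ e => .atom φ (e.kill A)
  | .prod G H => .prod (G.kill A) (H.kill A)
  | G => G

/-- Drop_A on edgeterms. -/
def EdgeTerm.drop (A : B) : EdgeTerm E B → EdgeTerm E B
  | .cw e C => if C = A then e else .cw (e.drop A) C
  | .acw e C => if C = A then e else .acw (e.drop A) C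
  | .cat e f => .cat (e.drop A) (f.drop A)
  | e => e

/-- Drop_A on !-pretensor expressions: removes the box `A` keeping its contents. -/
def Pretensor.drop (A : B) : Pretensor E B S → Pretensor E B S
  | .box G C => if C = A then G else .box (G.drop A) C
  | .atom φ e => .atom φ (e.drop A)
  | .prod G H => .prod (G.drop A) (H.drop A)
  | G => G

/-- Exp_{A,fr} on edgeterms. -/
def EdgeTerm.exp (A : B) (fe : E → E) (fb : B → B) : EdgeTerm E B → EdgeTerm E B
  | .cw e C => if C = A then .cat (.cw e C) (e.rename fe fb) else .cw (e.exp A fe fb) C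
  | .acw e C => if C = A then .cat (e.rename fe fb) (.acw e C) else .acw (e.exp A fe fb) C
  | .cat e f => .cat (e.exp A fe fb) (f.exp A fe fb)
  | e => e

/-- Exp_{A,fr} on !-pretensor expressions: appends a fresh copy of the contents. -/
def Pretensor.exp (A : B) (fe : E → E) (fb : B → B) : Pretensor E B S → Pretensor E B S
  | .box G C => if C = A then .prod (.box G C) (G.rename fe fb) else .box (G.exp A fe fb) C
  | .atom φ e => .atom φ (e.exp A fe fb)
  | .prod G H => .prod (G.exp A fe fb) (H.exp A fe fb)
  | G => G

/-- Copy_{A,fr} on edgeterms. -/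
def EdgeTerm.copy (A : B) (fe : E → E) (fb : B → B) : EdgeTerm E B → EdgeTerm E B
  | .cw e C =>
      if C = A then .cat (.cw e C) (.cw (e.rename fe fb) (fb A)) else .cw (e.copy A fe fb) C
  | .acw e C =>
      if C = A then .cat (.acw (e.rename fe fb) (fb A)) (.acw e C) else .acw (e.copy A fe fb) C
  | .cat e f => .cat (e.copy A fe fb) (f.copy A fe fb)
  | e => e

/-- Copy_{A,fr} on !-pretensor expressions: appends a freshly-named boxed copy. -/
def Pretensor.copy (A : B) (fe : E → E) (fb : B → B) : Pretensor E B S → Pretensor E B S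
  | .box G C =>
      if C = A then .prod (.box G C) (.box (G.rename fe fb) (fb A)) else .box (G.copy A fe fb) C
  | .atom φ e => .atom φ (e.copy A fe fb)
  | .prod G H => .prod (G.copy A fe fb) (H.copy A fe fb)
  | G => G

/-- A generic !-box operation: one of Kill, Drop, Exp, Copy. -/
inductive BoxOp : Type
  | kill | drop | exp | copy

/-- Apply a !-box operation at box `A` with freshness data `fe`, `fb`
(ignored by Kill and Drop). -/
def BoxOp.apply : BoxOp → B → (E → E) → (B → B) → Pretensor E B S → Pretensor E B S
  | .kill, A, _, _, G => G.kill A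
  | .drop, A, _, _, G => G.drop A
  | .exp, A, fe, fb, G => G.exp A fe fb
  | .copy, A, fe, fb, G => G.copy A fe fb

/-- Renaming of a single directed edge name (`o = true`: outputs, `o = false`: inputs). -/
def EdgeTerm.renameDir (o : Bool) (b c : E) : EdgeTerm E B → EdgeTerm E B
  | .eps => .eps
  | .out a => if o = true ∧ a = b then .out c else .out a
  | .inn a => if o = false ∧ a = b then .inn c else .inn a
  | .cw e A => .cw (e.renameDir o b c) A
  | .acw e A => .acw (e.renameDir o b c) A
  | .cat e f => .cat (e.renameDir o b c) (f.renameDir o b c)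

/-- Renaming of a single directed edge name in a !-pretensor expression. -/
def Pretensor.renameDir (o : Bool) (b c : E) : Pretensor E B S → Pretensor E B S
  | .triv => .triv
  | .idt a a' =>
      .idt (if o = true ∧ a = b then c else a) (if o = false ∧ a' = b then c else a')
  | .atom φ e => .atom φ (e.renameDir o b c)
  | .box G A => .box (G.renameDir o b c) A
  | .prod G H => .prod (G.renameDir o b c) (H.renameDir o b c)

/-- !-tensor expression equivalence: generated by renaming of bound edge names,
associativity, commutativity and unit of the product, the identity-tensor
contraction laws, and edgeterm equivalences within atomic tensors. -/
inductive PTEquiv : Pretensor E B S → Pretensor E B S → Prop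
  | refl (G) : PTEquiv G G
  | symm {G H} : PTEquiv G H → PTEquiv H G
  | trans {G H K} : PTEquiv G H → PTEquiv H K → PTEquiv G K
  | prodCongr {G G' H H'} : PTEquiv G G' → PTEquiv H H' → PTEquiv (.prod G H) (.prod G' H')
  | boxCongr (A) {G H} : PTEquiv G H → PTEquiv (.box G A) (.box H A)
  | atomCongr (φ) {e f} : ETEquiv e f → PTEquiv (.atom φ e) (.atom φ f)
  | assoc (G H K) : PTEquiv (.prod (.prod G H) K) (.prod G (.prod H K))
  | comm (G H) : PTEquiv (.prod G H) (.prod H G)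
  | unit (G) : PTEquiv (.prod G .triv) G
  -- G · 1_{b̂ ǎ} ≡ G[b̌ ↦ ǎ], for b̌ free in G
  | contractIn (G : Pretensor E B S) (b a : E) :
      G.occ (b, false) = true → G.occ (b, true) = false →
      PTEquiv (.prod G (.idt b a)) (G.renameDir false b a)
  -- H · 1_{â b̌} ≡ H[b̂ ↦ â], for b̂ free in H
  | contractOut (H : Pretensor E B S) (b a : E) :
      H.occ (b, true) = true → H.occ (b, false) = false →
      PTEquiv (.prod H (.idt a b)) (H.renameDir true b a)
  -- renaming of a bound edge name to a fresh name
  | boundRename (G : Pretensor E B S) (b c : E) :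
      G.occ (b, true) = true → G.occ (b, false) = true →
      G.occ (c, true) = false → G.occ (c, false) = false →
      PTEquiv G ((G.renameDir true b c).renameDir false b c)

/-- A directed edge is free in G if it occurs but its partner does not. -/
def Pretensor.freeD (G : Pretensor E B S) (d : E × Bool) : Prop :=
  G.occ d = true ∧ G.occ (d.1, !d.2) = false

/-- `(G, H)` is a !-tensor equation: compatible boundaries, i.e. identical free
edge names, identical !-boxes with the same nesting relation, and equal
contexts on all free edges. -/
def TensorEq (G H : Pretensor E B S) : Prop :=
  (∀ d : E × Bool, G.freeD d ↔ H.freeD d) ∧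
  G.boxSet = H.boxSet ∧
  (∀ A C : B, G.prec A C ↔ H.prec A C) ∧
  (∀ d : E × Bool, G.freeD d → G.ctx d = H.ctx d)

end Ops

end Bang

namespace List

variable {α : Type*}

theorem append_singleton_eq_append_cons {l l₁ l₂ : List α} {a c : α}
    (h : l ++ [c] = l₁ ++ a :: l₂) :
    (l₂ = [] ∧ l = l₁ ∧ c = a) ∨ ∃ l₂', l₂ = l₂' ++ [c] ∧ l = l₁ ++ a :: l₂' := by
  rcases eq_nil_or_concat l₂ with rfl | ⟨l₂, b, rfl⟩
  · simpa using h
  · rw [concat_eq_append, ← cons_append, ← append_assoc, ← concat_eq_append,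
      ← concat_eq_append, concat_inj] at h
    exact .inr ⟨l₂, by rw [h.2, concat_eq_append], h.1⟩

theorem Nodup.getElem_notMem_drop {l : List α} (hl : l.Nodup) {i : ℕ} (h : i < l.length) :
    l[i] ∉ l.drop (i + 1) :=
  (nodup_cons.mp (getElem_cons_drop h ▸ hl.sublist (drop_sublist i l))).1

end List

namespace Bang

variable {E B S : Type} {fe : E → E} {fb : B → B}

theorem IsFresh.apply_notMem_edgeSet {G : Pretensor E B S} (hfr : IsFresh fe fb G) {a : E}
    (ha : a ∈ G.edgeSet) : fe a ∉ G.edgeSet :=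
  fun h => Set.eq_empty_iff_forall_notMem.mp hfr.2.2.1 (fe a) ⟨h, a, ha, rfl⟩

namespace Pretensor

section Nesting

variable [DecidableEq B]

def size : Pretensor E B S → ℕ
  | .box G _ => G.size + 1
  | .prod G H => G.size + H.size + 1
  | _ => 1

-- Under F2 this is the size of the unique box named `A`, or 0 if there is none.
def boxSize : Pretensor E B S → B → ℕ
  | .box G C, A => (if C = A then G.size + 1 else 0) + G.boxSize A
  | .prod G H, A => G.boxSize A + H.boxSize A
  | _, _ => 0

theorem boxSize_le (G : Pretensor E B S) (A : B) : G.boxSize A ≤ G.countBox A * G.size := by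
  induction G with
  | box H C ih =>
    simp only [boxSize, countBox, size]
    split <;> nlinarith
  | prod G H ihG ihH =>
    simp only [boxSize, countBox, size]
    nlinarith
  | triv | idt _ _ | atom _ _ => simp [boxSize]

theorem one_le_countBox_of_mem_topBoxes {G : Pretensor E B S} {A : B} (h : A ∈ G.topBoxes) :
    1 ≤ G.countBox A := by
  induction G with
  | box H C => simp_all [topBoxes, countBox]
  | prod G H ihG ihH =>
    rw [topBoxes, Set.mem_union] at h
    rw [countBox]
    rcases h with h | h
    · exact (ihG h).trans (Nat.le_add_right _ _)
    · exact (ihH h).trans (Nat.le_add_left _ _)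
  | triv | idt _ _ | atom _ _ => simp [topBoxes] at h

theorem one_le_countBox_of_prec {G : Pretensor E B S} {A C : B} (h : G.prec A C) :
    1 ≤ G.countBox A := by
  induction G with
  | box H C ih =>
    rw [prec] at h
    rw [countBox]
    rcases h with ⟨-, h⟩ | h
    · exact (one_le_countBox_of_mem_topBoxes h).trans (Nat.le_add_left _ _)
    · exact (ih h).trans (Nat.le_add_left _ _)
  | prod G H ihG ihH =>
    rw [prec] at h
    rw [countBox]
    rcases h with h | h
    · exact (ihG h).trans (Nat.le_add_right _ _)
    · exact (ihH h).trans (Nat.le_add_left _ _)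
  | triv | idt _ _ | atom _ _ => simp [prec] at h

theorem boxSize_lt_of_prec {G : Pretensor E B S} (hF2 : ∀ X, G.countBox X ≤ 1) {A C : B}
    (h : G.prec A C) : G.boxSize A < G.boxSize C := by
  induction G with
  | box H D ih =>
    have hF2H : ∀ X, H.countBox X ≤ 1 := fun X => le_add_self.trans (hF2 X)
    rw [prec] at h
    have hA : 1 ≤ H.countBox A :=
      h.elim (fun h => one_le_countBox_of_mem_topBoxes h.2) one_le_countBox_of_prec
    have hDA : D ≠ A := by
      rintro rfl
      have := hF2 D
      rw [countBox, if_pos rfl] at this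
      omega
    simp only [boxSize, if_neg hDA, zero_add]
    rcases h with ⟨rfl, -⟩ | h
    · have := boxSize_le H A
      have := hF2H A
      rw [if_pos rfl]
      nlinarith
    · have := ih hF2H h
      omega
  | prod G H ihG ihH =>
    rw [prec] at h
    simp only [boxSize]
    rcases h with h | h
    · have := one_le_countBox_of_prec h
      have := hF2 A
      have := boxSize_le H A
      have := ihG (fun X => le_self_add.trans (hF2 X)) h
      rw [countBox] at *
      nlinarith
    · have := one_le_countBox_of_prec h
      have := hF2 A
      have := boxSize_le G A
      have := ihH (fun X => le_add_self.trans (hF2 X)) h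
      rw [countBox] at *
      nlinarith
  | triv | idt _ _ | atom _ _ => simp [prec] at h

theorem nodup_of_isChain_prec {G : Pretensor E B S} (hF2 : ∀ X, G.countBox X ≤ 1) {l : List B}
    (hl : l.IsChain G.prec) : l.Nodup := by
  have : (l.map G.boxSize).IsChain (· < ·) :=
    (List.isChain_map _).mpr (hl.imp fun _ _ => boxSize_lt_of_prec hF2)
  exact this.pairwise.nodup.of_map _

end Nesting

end Pretensor

variable [DecidableEq E]

namespace EdgeTerm

theorem occ_rename (hfe : Function.Injective fe) (e : EdgeTerm E B) (d : E × Bool) :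
    (e.rename fe fb).occ (fe d.1, d.2) = e.occ d := by
  induction e <;> simp_all [rename, occ, Prod.ext_iff, hfe.eq_iff]

theorem ectx_rename (hfe : Function.Injective fe) (e : EdgeTerm E B) (d : E × Bool) :
    (e.rename fe fb).ectx (fe d.1, d.2) = (e.ectx d).map fb := by
  induction e <;> simp_all [rename, ectx, occ_rename hfe] <;> split <;> simp

theorem occ_eq_false_of_notMem_edgeSet {e : EdgeTerm E B} {a : E} {o : Bool}
    (h : a ∉ e.edgeSet) : e.occ (a, o) = false := by
  induction e <;> simp_all [edgeSet, occ, Prod.ext_iff]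

theorem occ_of_ectx_ne_nil {e : EdgeTerm E B} {d : E × Bool} (h : e.ectx d ≠ []) :
    e.occ d = true := by
  induction e <;> simp_all [ectx, occ]
  all_goals split at h <;> simp_all

end EdgeTerm

namespace Pretensor

theorem occ_rename (hfe : Function.Injective fe) (G : Pretensor E B S) (d : E × Bool) :
    (G.rename fe fb).occ (fe d.1, d.2) = G.occ d := by
  induction G <;> simp_all [rename, occ, Prod.ext_iff, hfe.eq_iff, EdgeTerm.occ_rename hfe]

theorem ectx_rename (hfe : Function.Injective fe) (G : Pretensor E B S) (d : E × Bool) :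
    (G.rename fe fb).ectx (fe d.1, d.2) = (G.ectx d).map fb := by
  induction G <;> simp_all [rename, ectx, occ_rename hfe, EdgeTerm.ectx_rename hfe]
  split <;> simp_all

theorem nctx_rename (hfe : Function.Injective fe) (G : Pretensor E B S) (d : E × Bool) :
    (G.rename fe fb).nctx (fe d.1, d.2) = (G.nctx d).map fb := by
  induction G <;> simp_all [rename, nctx, occ_rename hfe] <;> split <;> simp_all

theorem occ_eq_false_of_notMem_edgeSet {G : Pretensor E B S} {a : E} {o : Bool}
    (h : a ∉ G.edgeSet) : G.occ (a, o) = false := by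
  induction G <;> simp_all [edgeSet, occ, Prod.ext_iff, EdgeTerm.occ_eq_false_of_notMem_edgeSet]

theorem mem_edgeSet_of_occ {G : Pretensor E B S} {d : E × Bool} (h : G.occ d = true) :
    d.1 ∈ G.edgeSet := by
  obtain ⟨a, o⟩ := d
  by_contra h'
  simp [occ_eq_false_of_notMem_edgeSet h'] at h

theorem occ_of_ectx_ne_nil {G : Pretensor E B S} {d : E × Bool} (h : G.ectx d ≠ []) :
    G.occ d = true := by
  induction G <;> simp_all [ectx, occ, EdgeTerm.occ_of_ectx_ne_nil]
  all_goals split at h <;> simp_all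

theorem occ_of_nctx_ne_nil {G : Pretensor E B S} {d : E × Bool} (h : G.nctx d ≠ []) :
    G.occ d = true := by
  induction G <;> simp_all [nctx, occ]
  all_goals split at h <;> simp_all

end Pretensor

variable [DecidableEq B]

namespace EdgeTerm

theorem copy_occ_eq_false (hfe : Function.Injective fe) {e : EdgeTerm E B} {d : E × Bool}
    {A : B} (hfd : fe d.1 ∉ e.edgeSet) (h : e.occ d = false) :
    (e.copy A fe fb).occ (fe d.1, d.2) = false := by
  induction e <;> simp_all [copy, occ, edgeSet, Prod.ext_iff] <;> split <;>
    simp_all [occ, occ_rename hfe, occ_eq_false_of_notMem_edgeSet]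

theorem copy_ectx (hfe : Function.Injective fe) {e : EdgeTerm E B} {d : E × Bool}
    {A : B} {l₁ l₂ : List B} (hfd : fe d.1 ∉ e.edgeSet) (hsplit : e.ectx d = l₁ ++ A :: l₂)
    (hA : A ∉ l₂) :
    (e.copy A fe fb).ectx (fe d.1, d.2) = (l₁ ++ [A]).map fb ++ l₂ := by
  induction e generalizing l₂ with
  | eps | out _ | inn _ => simp [ectx] at hsplit
  | cw e C ih | acw e C ih =>
    rw [edgeSet] at hfd
    have hocc : e.occ d = true := by
      by_contra h
      simp [ectx, h] at hsplit
    rw [ectx, if_pos hocc] at hsplit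
    rcases List.append_singleton_eq_append_cons hsplit with ⟨rfl, rfl, rfl⟩ | ⟨l₂, rfl, he⟩
    · simp [copy, ectx, occ, occ_rename hfe, ectx_rename hfe, occ_eq_false_of_notMem_edgeSet hfd,
        hocc]
    · have hCA : C ≠ A := by rintro rfl; simp at hA
      have ih' := ih hfd he (by simp_all)
      have hocc' : (e.copy A fe fb).occ (fe d.1, d.2) = true := occ_of_ectx_ne_nil (by simp [ih'])
      simp [copy, ectx, hCA, ih', hocc']
  | cat e f ihe ihf =>
    simp only [edgeSet, Set.mem_union, not_or] at hfd
    rw [ectx] at hsplit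
    rw [copy, ectx]
    by_cases he : e.occ d
    · rw [if_pos he] at hsplit
      have ih' := ihe hfd.1 hsplit hA
      rw [if_pos (occ_of_ectx_ne_nil (by simp [ih'])), ih']
    · rw [if_neg he] at hsplit
      rw [copy_occ_eq_false hfe hfd.1 (eq_false_of_ne_true he), if_neg Bool.false_ne_true,
        ihf hfd.2 hsplit hA]

end EdgeTerm

namespace Pretensor

theorem copy_occ_eq_false (hfe : Function.Injective fe) {G : Pretensor E B S} {d : E × Bool}
    {A : B} (hfd : fe d.1 ∉ G.edgeSet) (h : G.occ d = false) :
    (G.copy A fe fb).occ (fe d.1, d.2) = false := by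
  induction G <;> simp_all [copy, occ, edgeSet, Prod.ext_iff, EdgeTerm.copy_occ_eq_false hfe]
  split <;> simp_all [occ, occ_rename hfe, occ_eq_false_of_notMem_edgeSet]

theorem copy_ectx (hfe : Function.Injective fe) {G : Pretensor E B S} {d : E × Bool}
    {A : B} {l₁ l₂ : List B} (hfd : fe d.1 ∉ G.edgeSet) (hnA : A ∉ G.nctx d)
    (hsplit : G.ectx d = l₁ ++ A :: l₂) (hA : A ∉ l₂) :
    (G.copy A fe fb).ectx (fe d.1, d.2) = (l₁ ++ [A]).map fb ++ l₂ := by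
  induction G with
  | triv | idt _ _ => simp [ectx] at hsplit
  | atom φ e => exact EdgeTerm.copy_ectx hfe hfd hsplit hA
  | box H C ih =>
    rw [ectx] at hsplit
    have hocc : H.occ d = true := occ_of_ectx_ne_nil (by simp [hsplit])
    simp only [nctx, hocc, if_true, List.mem_append, List.mem_singleton, not_or] at hnA
    rw [copy, if_neg (Ne.symm hnA.2), ectx]
    exact ih hfd hnA.1 hsplit
  | prod G H ihG ihH =>
    simp only [edgeSet, Set.mem_union, not_or] at hfd
    rw [ectx] at hsplit
    rw [nctx] at hnA
    rw [copy, ectx]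
    by_cases hG : G.occ d
    · rw [if_pos hG] at hsplit hnA
      have ih' := ihG hfd.1 hnA hsplit
      rw [if_pos (occ_of_ectx_ne_nil (by simp [ih'])), ih']
    · rw [if_neg hG] at hsplit hnA
      rw [copy_occ_eq_false hfe hfd.1 (eq_false_of_ne_true hG), if_neg Bool.false_ne_true,
        ihH hfd.2 hnA hsplit]

theorem copy_nctx (hfe : Function.Injective fe) {G : Pretensor E B S} {d : E × Bool}
    {A : B} {l₁ l₂ : List B} (hfd : fe d.1 ∉ G.edgeSet) (heA : A ∉ G.ectx d)
    (hsplit : G.nctx d = l₁ ++ A :: l₂) (hA : A ∉ l₂) :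
    (G.copy A fe fb).ectx (fe d.1, d.2) = (G.ectx d).map fb ∧
      (G.copy A fe fb).nctx (fe d.1, d.2) = (l₁ ++ [A]).map fb ++ l₂ := by
  induction G generalizing l₂ with
  | triv | idt _ _ | atom _ _ => simp [nctx] at hsplit
  | box H C ih =>
    rw [edgeSet] at hfd
    rw [ectx] at heA
    have hocc : H.occ d = true := occ_of_nctx_ne_nil (G := H.box C) (by simp [hsplit])
    rw [nctx, if_pos hocc] at hsplit
    rcases List.append_singleton_eq_append_cons hsplit with ⟨rfl, rfl, rfl⟩ | ⟨l₂, rfl, he⟩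
    · simp [copy, ectx, nctx, occ, occ_rename hfe, ectx_rename hfe, nctx_rename hfe,
        occ_eq_false_of_notMem_edgeSet hfd, hocc]
    · have hCA : C ≠ A := by rintro rfl; simp at hA
      obtain ⟨ihe, ihn⟩ := ih hfd heA he (by simp_all)
      have hocc' : (H.copy A fe fb).occ (fe d.1, d.2) = true := occ_of_nctx_ne_nil (by simp [ihn])
      simp [copy, ectx, nctx, hCA, ihe, ihn, hocc']
  | prod G H ihG ihH =>
    simp only [edgeSet, Set.mem_union, not_or] at hfd
    rw [ectx] at heA
    rw [nctx] at hsplit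
    rw [copy, ectx, nctx, ectx]
    by_cases hG : G.occ d
    · rw [if_pos hG] at hsplit heA ⊢
      obtain ⟨ihe, ihn⟩ := ihG hfd.1 heA hsplit hA
      have hocc' : (G.copy A fe fb).occ (fe d.1, d.2) = true := occ_of_nctx_ne_nil (by simp [ihn])
      simp only [hocc', if_true]
      exact ⟨ihe, ihn⟩
    · rw [if_neg hG] at hsplit heA ⊢
      simp only [copy_occ_eq_false hfe hfd.1 (eq_false_of_ne_true hG), Bool.false_eq_true, if_false]
      exact ihH hfd.2 heA hsplit hA

theorem count_nctx_le_countBox (G : Pretensor E B S) (d : E × Bool) (A : B) :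
    (G.nctx d).count A ≤ G.countBox A := by
  induction G with
  | box H C ih =>
    rw [nctx, countBox]
    split
    · rw [List.count_append, List.count_singleton]
      split <;> simp_all
      omega
    · simp
  | prod G H ihG ihH =>
    rw [nctx, countBox]
    split <;> omega
  | triv | idt _ _ | atom _ _ => simp [nctx]

theorem nodup_nctx {G : Pretensor E B S} (hF2 : ∀ X, G.countBox X ≤ 1) (d : E × Bool) :
    (G.nctx d).Nodup :=
  List.nodup_iff_count_le_one.mpr fun A => (G.count_nctx_le_countBox d A).trans (hF2 A)

end Pretensor

end Bang

open Bang

/-- effect of Copy on the contexts of the fresh copy fr(a) of an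
edge a: copying at the i-th box of the edge context freshly renames the first
i entries of the edge context; copying at the i-th box of the node context
freshly renames the whole edge context and the first i entries of the node
context. -/
theorem copy_ctx_effect {E B S : Type} [DecidableEq E] [DecidableEq B]
    (G : Pretensor E B S) (hG : G.WF) (fe : E → E) (fb : B → B)
    (hfr : IsFresh fe fb G) (d : E × Bool) (hocc : G.occ d = true) :
    (∀ i (h : i < (G.ectx d).length),
      (G.copy ((G.ectx d).get ⟨i, h⟩) fe fb).ectx (fe d.1, d.2)
        = ((G.ectx d).take (i + 1)).map fb ++ (G.ectx d).drop (i + 1)) ∧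
    (∀ i (h : i < (G.nctx d).length),
      (G.copy ((G.nctx d).get ⟨i, h⟩) fe fb).ectx (fe d.1, d.2) = (G.ectx d).map fb ∧
      (G.copy ((G.nctx d).get ⟨i, h⟩) fe fb).nctx (fe d.1, d.2)
        = ((G.nctx d).take (i + 1)).map fb ++ (G.nctx d).drop (i + 1)) := by
  obtain ⟨-, hF2, hC1, hC2, -⟩ := hG
  have hfe : Function.Injective fe := hfr.1.injective
  have hfd : fe d.1 ∉ G.edgeSet := hfr.apply_notMem_edgeSet (G.mem_edgeSet_of_occ hocc)
  have hsplit (l : List B) {i : ℕ} (h : i < l.length) : l = l.take i ++ l[i] :: l.drop (i + 1) := by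
    rw [List.getElem_cons_drop, List.take_append_drop]
  refine ⟨fun i h => ?_, fun i h => ?_⟩
  · have hnodup := G.nodup_of_isChain_prec hF2 (hC2 d hocc).2
    rw [List.get_eq_getElem, G.copy_ectx hfe hfd (hC1 d hocc _ (List.getElem_mem h))
      (hsplit _ h) (hnodup.getElem_notMem_drop h), List.take_append_getElem]
  · rw [List.get_eq_getElem, ← List.take_append_getElem h]
    exact G.copy_nctx hfe hfd (fun hA => hC1 d hocc _ hA (List.getElem_mem h)) (hsplit _ h)
      ((G.nodup_nctx hF2 d).getElem_notMem_drop h)
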